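/- arXiv:1706.03316 — 2 statements merged into one kernel-verified Lean document; each statement's English description precedes it below -/
import Mathlib

section
/- The function f(x) = ln(1 + e^{−x}) is absolutely smooth: for every r > 0 and every positive integer k, the function x ↦ f(rx) is C^∞ on [−1,1] and satisfies ∫_{−1}^1 |d^{k+2}/dx^{k+2} f(rx)| / √(1−x²) dx ≤ r√(4π³(k+1)) · (r(k+1)/e)^{k+1}. -/
open Real Finset MeasureTheory

noncomputable def sg (t : ℝ) : ℝ := (1 + Real.exp (-t))⁻¹

lemma sg_denom_pos (t : ℝ) : 0 < 1 + Real.exp (-t) := by positivity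

lemma sg_pos (t : ℝ) : 0 < sg t := by
  unfold sg; positivity

lemma sg_lt_one (t : ℝ) : sg t < 1 := by
  unfold sg
  rw [inv_lt_one_iff₀]
  right
  nlinarith [Real.exp_pos (-t)]

lemma hasDerivAt_sg (t : ℝ) : HasDerivAt sg (sg t * (1 - sg t)) t := by
  have h1 : HasDerivAt (fun t : ℝ => -t) (-1) t := (hasDerivAt_id t).neg
  have h2 : HasDerivAt (fun t : ℝ => Real.exp (-t)) (Real.exp (-t) * (-1)) t :=
    (Real.hasDerivAt_exp (-t)).comp t h1
  have h3 : HasDerivAt (fun t : ℝ => 1 + Real.exp (-t)) (0 + Real.exp (-t) * (-1)) t :=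
    (hasDerivAt_const t 1).add h2
  have h4 := h3.inv (sg_denom_pos t).ne'
  refine h4.congr_deriv ?_
  have hz := (Real.exp_pos (-t)).le
  have hd := (sg_denom_pos t).ne'
  unfold sg
  field_simp
  ring

noncomputable def nxt (n : ℕ) (c : ℕ → ℝ) : ℕ → ℝ
  | 0 => c 0
  | (k+1) => ((k : ℝ) + 2) * c (k+1) - ((n + 1 - k : ℕ) : ℝ) * c k

lemma nxt_zero_of_ge (n : ℕ) (c : ℕ → ℝ) (hc : ∀ j, n + 1 ≤ j → c j = 0)
    (j : ℕ) (hj : n + 2 ≤ j) : nxt n c j = 0 := by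
  obtain ⟨k, rfl⟩ : ∃ k, j = k + 1 := ⟨j - 1, by omega⟩
  have h1 : c (k + 1) = 0 := hc _ (by omega)
  have h2 : (n + 1 - k : ℕ) = 0 := by omega
  simp [nxt, h1, h2]

lemma nxt_abs_sum_le (n : ℕ) (c : ℕ → ℝ) (hc : ∀ j, n + 1 ≤ j → c j = 0) :
    ∑ j ∈ range (n + 2), |nxt n c j| ≤ (n + 2) * ∑ j ∈ range (n + 1), |c j| := by
  rw [Finset.sum_range_succ' (fun j => |nxt n c j|) (n + 1)]
  have h1 : ∀ k ∈ range (n + 1),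
      |nxt n c (k + 1)| ≤ ((k : ℝ) + 2) * |c (k + 1)| + ((n + 1 - k : ℕ) : ℝ) * |c k| := by
    intro k _
    refine (abs_sub _ _).trans ?_
    rw [abs_mul, abs_mul]
    have e1 : |((k : ℝ) + 2)| = ((k : ℝ) + 2) := abs_of_nonneg (by positivity)
    have e2 : |((n + 1 - k : ℕ) : ℝ)| = ((n + 1 - k : ℕ) : ℝ) := abs_of_nonneg (by positivity)
    rw [e1, e2]
  have h2 : ∑ k ∈ range (n + 1), |nxt n c (k + 1)| ≤
      ∑ k ∈ range (n + 1), (((k : ℝ) + 2) * |c (k + 1)| + ((n + 1 - k : ℕ) : ℝ) * |c k|) :=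
    Finset.sum_le_sum h1
  have h3 : ∑ k ∈ range (n + 1), ((k : ℝ) + 2) * |c (k + 1)| =
      ∑ k ∈ range n, ((k : ℝ) + 2) * |c (k + 1)| := by
    rw [Finset.sum_range_succ]
    simp [hc (n + 1) le_rfl]
  have h4 : ∑ j ∈ range (n + 1), ((j : ℝ) + 1) * |c j| =
      ∑ k ∈ range n, ((k : ℝ) + 2) * |c (k + 1)| + 1 * |c 0| := by
    rw [Finset.sum_range_succ' (fun j => ((j : ℝ) + 1) * |c j|) n]
    push_cast
    rw [Finset.sum_congr rfl (fun (x : ℕ) (_ : x ∈ range n) =>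
      (by ring : ((x:ℝ) + 1 + 1) * |c (x + 1)| = ((x:ℝ) + 2) * |c (x + 1)|))]
    ring
  have hn0 : |nxt n c 0| = |c 0| := by simp [nxt]
  have key : ∑ k ∈ range (n + 1), |nxt n c (k + 1)| + |nxt n c 0| ≤
      ∑ j ∈ range (n + 1), (((j : ℝ) + 1) + ((n + 1 - j : ℕ) : ℝ)) * |c j| := by
    rw [hn0]
    have h5 : ∑ j ∈ range (n+1), (((j : ℝ) + 1) + ((n + 1 - j : ℕ) : ℝ)) * |c j|
        = ∑ j ∈ range (n+1), ((j:ℝ)+1) * |c j|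
          + ∑ j ∈ range (n+1), ((n+1-j:ℕ):ℝ) * |c j| := by
      rw [← Finset.sum_add_distrib]; exact Finset.sum_congr rfl (fun j _ => by ring)
    have h6 := h2.trans_eq (by rw [Finset.sum_add_distrib, h3])
    rw [h5, h4]
    linarith
  refine key.trans ?_
  have h7 : ∑ j ∈ range (n + 1), (((j : ℝ) + 1) + ((n + 1 - j : ℕ) : ℝ)) * |c j|
      = ∑ j ∈ range (n + 1), ((n : ℝ) + 2) * |c j| := by
    refine Finset.sum_congr rfl (fun j hj => ?_)
    have : (j : ℕ) ≤ n := by simpa using Nat.lt_succ_iff.mp (Finset.mem_range.mp hj)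
    have : ((n + 1 - j : ℕ) : ℝ) = (n : ℝ) + 1 - j := by
      push_cast [Nat.cast_sub (by omega : j ≤ n + 1)]; ring
    rw [this]; ring
  rw [h7, ← Finset.mul_sum]

lemma nxt_sum_eq (n : ℕ) (c : ℕ → ℝ) (hc : ∀ j, n+1 ≤ j → c j = 0) (u w : ℝ) :
    ∑ j ∈ range (n+1), c j * (((j:ℝ)+1) * (u^(j+1) * w^(n+2-j))
        - ((n+1-j : ℕ):ℝ) * (u^(j+2) * w^(n+1-j)))
      = ∑ j ∈ range (n+2), nxt n c j * (u^(j+1) * w^(n+2-j)) := by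
  rw [Finset.sum_range_succ' (fun j => nxt n c j * (u^(j+1) * w^(n+2-j))) (n+1)]
  have L : ∑ j ∈ range (n+1), c j * (((j:ℝ)+1) * (u^(j+1) * w^(n+2-j))
        - ((n+1-j : ℕ):ℝ) * (u^(j+2) * w^(n+1-j)))
      = ∑ j ∈ range (n+1), (((j:ℝ)+1) * c j * u^(j+1) * w^(n+2-j))
        - ∑ j ∈ range (n+1), (((n+1-j : ℕ):ℝ) * c j * u^(j+2) * w^(n+1-j)) := by
    rw [← Finset.sum_sub_distrib]
    exact Finset.sum_congr rfl fun j _ => by ring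
  rw [L]
  have A : ∑ j ∈ range (n+1), (((j:ℝ)+1) * c j * u^(j+1) * w^(n+2-j))
      = ∑ k ∈ range (n+1), (((k:ℝ)+2) * c (k+1) * u^(k+2) * w^(n+1-k))
        + c 0 * u^1 * w^(n+2) := by
    rw [Finset.sum_range_succ' (fun j => ((j:ℝ)+1) * c j * u^(j+1) * w^(n+2-j)) n]
    rw [Finset.sum_range_succ (fun k => ((k:ℝ)+2) * c (k+1) * u^(k+2) * w^(n+1-k)) n]
    rw [hc (n+1) le_rfl]
    simp only [mul_zero, zero_mul, add_zero, Nat.sub_zero, Nat.cast_zero, zero_add]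
    congr 1
    · refine Finset.sum_congr rfl fun k _ => ?_
      have h : n + 2 - (k+1) = n + 1 - k := by omega
      rw [h]; push_cast; ring
    · ring
  rw [A]
  have R : ∑ k ∈ range (n+1), (((k:ℝ)+2) * c (k+1) * u^(k+2) * w^(n+1-k)) + c 0 * u^1 * w^(n+2)
      - ∑ j ∈ range (n+1), (((n+1-j : ℕ):ℝ) * c j * u^(j+2) * w^(n+1-j))
      = (∑ k ∈ range (n+1), (((k:ℝ)+2) * c (k+1) * u^(k+2) * w^(n+1-k))
        - ∑ j ∈ range (n+1), (((n+1-j : ℕ):ℝ) * c j * u^(j+2) * w^(n+1-j)))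
        + c 0 * u^1 * w^(n+2) := by ring
  rw [R, ← Finset.sum_sub_distrib]
  congr 1
  · refine Finset.sum_congr rfl fun k _ => ?_
    have h : n + 2 - (k+1) = n + 1 - k := by omega
    simp only [nxt, h]
    ring
  · simp only [nxt, pow_one, Nat.sub_zero, zero_add, pow_zero]
    ring
lemma hU (r x : ℝ) : HasDerivAt (fun x => sg (r*x)) (sg (r*x) * (1 - sg (r*x)) * r) x := by
  have h := (hasDerivAt_sg (r*x)).comp x ((hasDerivAt_id x).const_mul r)
  exact h.congr_deriv (by ring)

lemma deriv_g (r x : ℝ) :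
    HasDerivAt (fun x : ℝ => Real.log (1 + Real.exp (-(r * x)))) (r * (sg (r*x) - 1)) x := by
  have hneg : HasDerivAt (fun x : ℝ => -(r*x)) (-(r*1)) x := ((hasDerivAt_id x).const_mul r).neg
  have hexp : HasDerivAt (fun x : ℝ => Real.exp (-(r*x))) (Real.exp (-(r*x)) * -(r*1)) x :=
    by have := (Real.hasDerivAt_exp (-(r*x))).comp x hneg; exact this
  have hin : HasDerivAt (fun x : ℝ => 1 + Real.exp (-(r*x)))
      (0 + Real.exp (-(r*x)) * -(r*1)) x := (hasDerivAt_const x 1).add hexp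
  have hlog := hin.log (sg_denom_pos (r*x)).ne'
  convert hlog using 1
  have hd := (sg_denom_pos (r*x)).ne'
  unfold sg
  rw [eq_div_iff hd]
  field_simp
  ring

lemma rep (r : ℝ) (n : ℕ) :
    ∃ c : ℕ → ℝ, (∀ j, n + 1 ≤ j → c j = 0) ∧
      (∑ j ∈ range (n+1), |c j|) ≤ (Nat.factorial (n+1) : ℝ) ∧
      ∀ x : ℝ, iteratedDeriv (n+2) (fun x : ℝ => Real.log (1 + Real.exp (-(r * x)))) x
        = r^(n+2) * ∑ j ∈ range (n+1),
            c j * ((sg (r*x))^(j+1) * (1 - sg (r*x))^(n+1-j)) := by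
  induction n with
  | zero =>
    refine ⟨fun j => if j = 0 then 1 else 0, fun j hj => if_neg (by omega), ?_, ?_⟩
    · simp
    · intro x
      have h1 : iteratedDeriv 2 (fun x : ℝ => Real.log (1 + Real.exp (-(r * x))))
          = deriv (deriv (fun x : ℝ => Real.log (1 + Real.exp (-(r * x))))) := by
        rw [iteratedDeriv_succ, iteratedDeriv_one]
      rw [h1]
      have h2 : deriv (fun x : ℝ => Real.log (1 + Real.exp (-(r * x))))
          = fun x => r * (sg (r*x) - 1) := funext fun y => (deriv_g r y).deriv
      rw [h2]
      have h3 : HasDerivAt (fun x => r * (sg (r*x) - 1))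
          (r * (sg (r*x) * (1 - sg (r*x)) * r)) x := ((hU r x).sub_const 1).const_mul r
      rw [h3.deriv]
      simp [Finset.sum_range_one]
      ring
  | succ n ih =>
    obtain ⟨c, hc0, hcs, hrep⟩ := ih
    refine ⟨nxt n c, ?_, ?_, ?_⟩
    · intro j hj
      exact nxt_zero_of_ge n c hc0 j (by omega)
    · have h1 := nxt_abs_sum_le n c hc0
      have h2 : ((n:ℝ) + 2) * ∑ j ∈ range (n + 1), |c j|
          ≤ ((n:ℝ)+2) * (Nat.factorial (n+1) : ℝ) := by
        have hpos : (0:ℝ) ≤ (n:ℝ) + 2 := by positivity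
        nlinarith [hcs, hpos]
      have h3 : ((n:ℝ)+2) * (Nat.factorial (n+1) : ℝ) = (Nat.factorial (n+1+1) : ℝ) := by
        rw [show n+1+1 = n+2 by omega, Nat.factorial_succ (n+1)]
        push_cast
        ring
      calc ∑ j ∈ range (n+1+1), |nxt n c j|
          ≤ ((n:ℝ) + 2) * ∑ j ∈ range (n + 1), |c j| := by
            rw [show n+1+1 = n+2 by omega]; exact_mod_cast h1
        _ ≤ (Nat.factorial (n+1+1) : ℝ) := by rw [← h3]; exact h2
    · intro x
      have main : HasDerivAt
          (fun x => r^(n+2) * ∑ j ∈ range (n+1),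
            c j * ((sg (r*x))^(j+1) * (1 - sg (r*x))^(n+1-j)))
          (r^(n+3) * ∑ j ∈ range (n+2),
            nxt n c j * ((sg (r*x))^(j+1) * (1 - sg (r*x))^(n+2-j))) x := by
        have hterm : ∀ j ∈ range (n+1), HasDerivAt
            (fun x => c j * ((sg (r*x))^(j+1) * (1 - sg (r*x))^(n+1-j)))
            (c j * (((j:ℝ)+1) * ((sg (r*x))^(j+1) * (1 - sg (r*x))^(n+2-j))
              - ((n+1-j : ℕ):ℝ) * ((sg (r*x))^(j+2) * (1 - sg (r*x))^(n+1-j))) * r) x := by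
          intro j hj
          have hjn : j ≤ n := Nat.lt_succ_iff.mp (Finset.mem_range.mp hj)
          have e1 : n + 1 - j = (n - j) + 1 := by omega
          have e2 : n + 2 - j = (n - j) + 2 := by omega
          have h1 : HasDerivAt (fun x => (sg (r*x))^(j+1))
              (((j:ℝ)+1) * (sg (r*x))^j * (sg (r*x) * (1 - sg (r*x)) * r)) x := by
            have := (hU r x).pow (j+1)
            simp at this; exact this
          have h2 := ((hasDerivAt_const x (1:ℝ)).sub (hU r x)).pow (n+1-j)
          have h3 := (h1.mul h2).const_mul (c j)
          refine h3.congr_deriv ?_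
          have e3 : n + 1 - j - 1 = n - j := by omega
          rw [e3, e1, e2]
          simp only [Pi.pow_apply, Pi.sub_apply]
          push_cast
          ring
        have hsum := HasDerivAt.fun_sum hterm
        have hmul := hsum.const_mul (r^(n+2))
        refine hmul.congr_deriv ?_
        have hre : ∑ j ∈ range (n+1),
            (c j * (((j:ℝ)+1) * ((sg (r*x))^(j+1) * (1 - sg (r*x))^(n+2-j))
              - ((n+1-j : ℕ):ℝ) * ((sg (r*x))^(j+2) * (1 - sg (r*x))^(n+1-j))) * r)
            = (∑ j ∈ range (n+2),
                nxt n c j * ((sg (r*x))^(j+1) * (1 - sg (r*x))^(n+2-j))) * r := by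
          rw [← Finset.sum_mul, nxt_sum_eq n c hc0]
        rw [hre]
        ring
      have hE : n + 1 + 2 = (n + 2) + 1 := by omega
      rw [hE, iteratedDeriv_succ]
      have hfun : iteratedDeriv (n+2) (fun x : ℝ => Real.log (1 + Real.exp (-(r * x))))
          = fun x => r^(n+2) * ∑ j ∈ range (n+1),
            c j * ((sg (r*x))^(j+1) * (1 - sg (r*x))^(n+1-j)) := funext hrep
      rw [hfun, main.deriv]


lemma image_sin_Ioo : Real.sin '' Set.Ioo (-(π/2)) (π/2) = Set.Ioo (-1 : ℝ) 1 := by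
  ext y
  constructor
  · rintro ⟨θ, hθ, rfl⟩
    obtain ⟨h1, h2⟩ := hθ
    have hpi := Real.pi_pos
    constructor
    · have := Real.strictMonoOn_sin (Set.mem_Icc.mpr ⟨le_refl _, by linarith⟩)
        (Set.mem_Icc.mpr ⟨h1.le, h2.le⟩) h1
      simpa using this
    · have := Real.strictMonoOn_sin (Set.mem_Icc.mpr ⟨h1.le, h2.le⟩)
        (Set.mem_Icc.mpr ⟨by linarith, le_refl _⟩) h2
      simpa using this
  · rintro ⟨h1, h2⟩
    exact ⟨Real.arcsin y, ⟨Real.neg_pi_div_two_lt_arcsin.mpr h1,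
      Real.arcsin_lt_pi_div_two.mpr h2⟩, Real.sin_arcsin h1.le h2.le⟩

lemma weight_eqon : Set.EqOn (fun θ => |Real.cos θ| • (1 / Real.sqrt (1 - (Real.sin θ)^2)))
    (fun _ => (1:ℝ)) (Set.Ioo (-(π/2)) (π/2)) := by
  intro θ hθ
  have hc : 0 < Real.cos θ := Real.cos_pos_of_mem_Ioo hθ
  have h1 : 1 - Real.sin θ ^ 2 = Real.cos θ ^ 2 := (Real.cos_sq' θ).symm
  simp only [h1, Real.sqrt_sq hc.le, smul_eq_mul, abs_of_pos hc]
  field_simp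

lemma weight_int : IntegrableOn (fun x : ℝ => 1 / Real.sqrt (1 - x^2)) (Set.Ioo (-1) 1)
    ∧ ∫ x in Set.Ioo (-1:ℝ) 1, 1 / Real.sqrt (1-x^2) = π := by
  have hderiv : ∀ θ ∈ Set.Ioo (-(π/2)) (π/2),
      HasDerivWithinAt Real.sin (Real.cos θ) (Set.Ioo (-(π/2)) (π/2)) θ :=
    fun θ _ => (Real.hasDerivAt_sin θ).hasDerivWithinAt
  have hinj : Set.InjOn Real.sin (Set.Ioo (-(π/2)) (π/2)) :=
    Real.injOn_sin.mono Set.Ioo_subset_Icc_self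
  have hvol : (volume (Set.Ioo (-(π/2)) (π/2) : Set ℝ)).toReal = π := by
    rw [Real.volume_Ioo, ENNReal.toReal_ofReal (by linarith [Real.pi_pos])]
    ring
  constructor
  · rw [← image_sin_Ioo,
      integrableOn_image_iff_integrableOn_abs_deriv_smul measurableSet_Ioo hderiv hinj]
    exact (integrableOn_congr_fun weight_eqon measurableSet_Ioo).mpr
      ((integrableOn_const_iff).mpr (Or.inr (by rw [Real.volume_Ioo]; exact ENNReal.ofReal_lt_top)))
  · rw [← image_sin_Ioo,
      integral_image_eq_integral_abs_deriv_smul measurableSet_Ioo hderiv hinj]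
    rw [setIntegral_congr_fun measurableSet_Ioo weight_eqon]
    rw [setIntegral_const, measureReal_def, hvol, smul_eq_mul, mul_one]


lemma fact_le_stirling (m : ℕ) (hm : 1 ≤ m) :
    (Nat.factorial m : ℝ) ≤ Real.exp 1 * Real.sqrt m * (m / Real.exp 1) ^ m := by
  obtain ⟨j, rfl⟩ : ∃ j, m = j + 1 := ⟨m - 1, by omega⟩
  have hden : (0:ℝ) < Real.sqrt (2 * (j+1)) * ((j+1) / Real.exp 1) ^ (j+1) := by
    have : (0:ℝ) < ((j:ℝ)+1) / Real.exp 1 := by positivity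
    have h2 : (0:ℝ) < Real.sqrt (2 * (j+1)) := Real.sqrt_pos.mpr (by positivity)
    positivity
  have hanti := Stirling.stirlingSeq'_antitone (Nat.zero_le j)
  have h1 : Stirling.stirlingSeq (j+1) ≤ Stirling.stirlingSeq 1 := hanti
  rw [Stirling.stirlingSeq_one] at h1
  have h2 : (Nat.factorial (j+1) : ℝ)
      = Stirling.stirlingSeq (j+1) * (Real.sqrt (2 * (j+1)) * ((j+1) / Real.exp 1) ^ (j+1)) := by
    rw [Stirling.stirlingSeq]
    field_simp
    push_cast
    ring
  rw [h2]
  have h3 : Stirling.stirlingSeq (j+1) * (Real.sqrt (2 * (j+1)) * ((j+1) / Real.exp 1) ^ (j+1))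
      ≤ (Real.exp 1 / Real.sqrt 2) * (Real.sqrt (2 * (j+1)) * ((j+1) / Real.exp 1) ^ (j+1)) :=
    mul_le_mul_of_nonneg_right h1 hden.le
  refine h3.trans ?_
  have h4 : Real.sqrt (2 * (j+1)) = Real.sqrt 2 * Real.sqrt (j+1) :=
    Real.sqrt_mul (by norm_num) _
  rw [h4]
  have hs2 : (0:ℝ) < Real.sqrt 2 := Real.sqrt_pos.mpr (by norm_num)
  have : Real.exp 1 / Real.sqrt 2 * (Real.sqrt 2 * Real.sqrt (j+1) * ((j+1) / Real.exp 1) ^ (j+1))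
      = Real.exp 1 * Real.sqrt (j+1) * ((j+1) / Real.exp 1) ^ (j+1) := by
    field_simp
  rw [this]
  push_cast
  exact le_refl _

lemma exp_one_le_two_sqrt_pi : Real.exp 1 ≤ 2 * Real.sqrt π := by
  have h1 : Real.exp 1 < 2.7182818286 := Real.exp_one_lt_d9
  have h2 : (1.36:ℝ) ≤ Real.sqrt π := by
    have : (1.36:ℝ) = Real.sqrt (1.36^2) := (Real.sqrt_sq (by norm_num)).symm
    rw [this]
    exact Real.sqrt_le_sqrt (by nlinarith [Real.pi_gt_d6])
  nlinarith

/-- The softplus function `f(x) = ln(1 + e^{−x})` is absolutely smooth: for every `r > 0`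
and every positive integer `k`, the rescaled function `x ↦ f(rx)` is `C^∞`, and the
Chebyshev-weighted integral of its `(k+2)`-nd derivative satisfies
`∫_{−1}^1 |(f(r·))^{(k+2)}(x)|/√(1−x²) dx ≤ r √(4π³(k+1)) (r(k+1)/e)^{k+1}`. -/
theorem softplus_absolutely_smooth (r : ℝ) (hr : 0 < r) (k : ℕ) (hk : 1 ≤ k) :
    ContDiff ℝ (⊤ : ℕ∞) (fun x : ℝ => Real.log (1 + Real.exp (-(r * x)))) ∧
      (∫ x in Set.Ioo (-1 : ℝ) 1,
          |iteratedDeriv (k + 2) (fun x : ℝ => Real.log (1 + Real.exp (-(r * x)))) x| /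
            Real.sqrt (1 - x ^ 2)) ≤
        r * Real.sqrt (4 * Real.pi ^ 3 * (k + 1)) * (r * (k + 1) / Real.exp 1) ^ (k + 1) := by
  have hcd : ContDiff ℝ (⊤ : ℕ∞) (fun x : ℝ => Real.log (1 + Real.exp (-(r * x)))) := by
    have h1 : ContDiff ℝ (⊤ : ℕ∞) (fun x : ℝ => 1 + Real.exp (-(r * x))) :=
      contDiff_const.add ((contDiff_const.mul contDiff_id).neg.exp)
    exact h1.log fun x => (sg_denom_pos (r*x)).ne'
  refine ⟨hcd, ?_⟩
  set f := fun x : ℝ => Real.log (1 + Real.exp (-(r * x))) with hf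
  set C := r^(k+2) * (Nat.factorial (k+1) : ℝ) with hC
  have hCpos : 0 < C := by
    have := Nat.factorial_pos (k+1)
    positivity
  -- pointwise bound
  obtain ⟨c, hc0, hcs, hrep⟩ := rep r k
  have hptwise : ∀ x : ℝ, |iteratedDeriv (k+2) f x| ≤ C := by
    intro x
    rw [hrep x]
    have hu0 := sg_pos (r*x)
    have hu1 := sg_lt_one (r*x)
    have habs : |∑ j ∈ range (k+1), c j * ((sg (r*x))^(j+1) * (1 - sg (r*x))^(k+1-j))|
        ≤ ∑ j ∈ range (k+1), |c j| := by
      refine (Finset.abs_sum_le_sum_abs _ _).trans (Finset.sum_le_sum fun j _ => ?_)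
      rw [abs_mul]
      have h1 : |(sg (r*x))^(j+1) * (1 - sg (r*x))^(k+1-j)| ≤ 1 := by
        rw [abs_mul, abs_pow, abs_pow, abs_of_pos hu0, abs_of_pos (by linarith)]
        have p1 : (sg (r*x))^(j+1) ≤ 1 := pow_le_one₀ hu0.le hu1.le
        have p2 : (1 - sg (r*x))^(k+1-j) ≤ 1 := pow_le_one₀ (by linarith) (by linarith)
        have q1 : (0:ℝ) ≤ (sg (r*x))^(j+1) := pow_nonneg hu0.le _
        have q2 : (0:ℝ) ≤ (1 - sg (r*x))^(k+1-j) := pow_nonneg (by linarith) _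
        nlinarith
      calc |c j| * |(sg (r*x))^(j+1) * (1 - sg (r*x))^(k+1-j)| ≤ |c j| * 1 :=
            mul_le_mul_of_nonneg_left h1 (abs_nonneg _)
        _ = |c j| := mul_one _
    rw [abs_mul, abs_of_pos (pow_pos hr (k+2))]
    calc r^(k+2) * |∑ j ∈ range (k+1), c j * ((sg (r*x))^(j+1) * (1 - sg (r*x))^(k+1-j))|
        ≤ r^(k+2) * ∑ j ∈ range (k+1), |c j| :=
          mul_le_mul_of_nonneg_left habs (by positivity)
      _ ≤ C := by
          rw [hC]
          exact mul_le_mul_of_nonneg_left hcs (by positivity)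
  -- integrability and integral bound
  have hwint := weight_int
  have hψint : MeasureTheory.IntegrableOn (fun x : ℝ => C * (1 / Real.sqrt (1 - x^2)))
      (Set.Ioo (-1) 1) := hwint.1.const_mul C
  have hcont : Continuous (iteratedDeriv (k+2) f) :=
    hcd.continuous_iteratedDeriv (k+2) (WithTop.coe_le_coe.mpr (le_top : ((k+2 : ℕ) : ℕ∞) ≤ ⊤))
  have hφmeas : MeasureTheory.AEStronglyMeasurable
      (fun x : ℝ => |iteratedDeriv (k+2) f x| / Real.sqrt (1 - x^2))
      (MeasureTheory.volume.restrict (Set.Ioo (-1) 1)) :=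
    (hcont.abs.measurable.div
      ((continuous_const.sub (continuous_pow 2)).sqrt.measurable)).aestronglyMeasurable
  have hbound : ∀ x ∈ Set.Ioo (-1:ℝ) 1,
      |iteratedDeriv (k+2) f x| / Real.sqrt (1 - x^2) ≤ C * (1 / Real.sqrt (1 - x^2)) := by
    intro x hx
    obtain ⟨h1, h2⟩ := hx
    have hs : 0 < Real.sqrt (1 - x^2) := Real.sqrt_pos.mpr (by nlinarith)
    rw [mul_one_div]
    gcongr
    exact hptwise x
  have hφint : MeasureTheory.IntegrableOn
      (fun x : ℝ => |iteratedDeriv (k+2) f x| / Real.sqrt (1 - x^2)) (Set.Ioo (-1) 1) := by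
    refine MeasureTheory.Integrable.mono hψint hφmeas ?_
    rw [MeasureTheory.ae_restrict_iff' measurableSet_Ioo]
    filter_upwards with x hx
    have hnn : 0 ≤ |iteratedDeriv (k+2) f x| / Real.sqrt (1 - x^2) :=
      div_nonneg (abs_nonneg _) (Real.sqrt_nonneg _)
    have hnn2 : 0 ≤ C * (1 / Real.sqrt (1 - x^2)) := by positivity
    rw [Real.norm_eq_abs, Real.norm_eq_abs, abs_of_nonneg hnn, abs_of_nonneg hnn2]
    exact hbound x hx
  have hint_le : (∫ x in Set.Ioo (-1:ℝ) 1, |iteratedDeriv (k+2) f x| / Real.sqrt (1 - x^2))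
      ≤ ∫ x in Set.Ioo (-1:ℝ) 1, C * (1 / Real.sqrt (1 - x^2)) :=
    MeasureTheory.setIntegral_mono_on hφint hψint measurableSet_Ioo hbound
  have hval : (∫ x in Set.Ioo (-1:ℝ) 1, C * (1 / Real.sqrt (1 - x^2))) = C * π := by
    rw [MeasureTheory.integral_const_mul]
    congr 1
    simpa using hwint.2
  -- final arithmetic
  have hfinal : C * π ≤ r * Real.sqrt (4 * π ^ 3 * (k + 1)) * (r * (k + 1) / Real.exp 1) ^ (k + 1) := by
    set M : ℝ := (k:ℝ) + 1 with hM
    have hMpos : 0 < M := by positivity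
    have hfact : (Nat.factorial (k+1) : ℝ) ≤ Real.exp 1 * Real.sqrt M * (M / Real.exp 1) ^ (k+1) := by
      have := fact_le_stirling (k+1) (by omega)
      push_cast at this
      convert this using 2
    have hsq : Real.sqrt (4 * π ^ 3 * M) = 2 * π * (Real.sqrt π * Real.sqrt M) := by
      rw [show 4 * π ^ 3 * M = (2*π)^2 * (π * M) by ring,
        Real.sqrt_mul (by positivity), Real.sqrt_sq (by positivity),
        Real.sqrt_mul Real.pi_pos.le]
    have hrhs : r * Real.sqrt (4 * π ^ 3 * M) * (r * M / Real.exp 1) ^ (k + 1)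
        = r^(k+2) * (Real.sqrt (4 * π ^ 3 * M) * (M / Real.exp 1) ^ (k+1)) := by
      rw [show r * M / Real.exp 1 = r * (M / Real.exp 1) by ring, mul_pow]
      ring
    rw [hrhs, hC]
    have hkey : (Nat.factorial (k+1) : ℝ) * π
        ≤ Real.sqrt (4 * π ^ 3 * M) * (M / Real.exp 1) ^ (k+1) := by
      have h1 : (Nat.factorial (k+1) : ℝ) * π
          ≤ (Real.exp 1 * Real.sqrt M * (M / Real.exp 1) ^ (k+1)) * π :=
        mul_le_mul_of_nonneg_right hfact Real.pi_pos.le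
      refine h1.trans ?_
      rw [hsq]
      have h2 := exp_one_le_two_sqrt_pi
      have hp : (0:ℝ) ≤ (M / Real.exp 1) ^ (k+1) := by positivity
      have hsM : (0:ℝ) ≤ Real.sqrt M := Real.sqrt_nonneg _
      have hsπ : (0:ℝ) ≤ Real.sqrt π := Real.sqrt_nonneg _
      have h3 := mul_le_mul_of_nonneg_right h2
        (mul_nonneg (mul_nonneg Real.pi_pos.le hsM) hp)
      nlinarith [h3]
    calc r^(k+2) * (Nat.factorial (k+1) : ℝ) * π
        = r^(k+2) * ((Nat.factorial (k+1) : ℝ) * π) := by ring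
      _ ≤ r^(k+2) * (Real.sqrt (4 * π ^ 3 * M) * (M / Real.exp 1) ^ (k+1)) :=
          mul_le_mul_of_nonneg_left hkey (by positivity)
  calc (∫ x in Set.Ioo (-1:ℝ) 1, |iteratedDeriv (k+2) f x| / Real.sqrt (1 - x^2))
      ≤ C * π := hint_le.trans_eq hval
    _ ≤ _ := hfinal
end

section
/- All derivatives of the softplus function are uniformly bounded by factorials: for f(x) = ln(1 + e^{−x}) and every integer k ≥ 2, sup_{x∈ℝ} |f^{(k)}(x)| ≤ (k−1)!. -/
/-!
With `σ` the sigmoid, `f' = σ - 1` and `σ' = σ (1 - σ)`, so every derivative of `f` is a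
homogeneous form in `u = σ`, `v = 1 - σ`, and differentiation acts on such forms as the operator
`uv (∂ᵤ - ∂ᵥ)`. On forms of degree `m` this operator multiplies the `ℓ¹`-norm of the coefficients
by at most `m`, so the coefficients of `f⁽ᵏ⁾` have `ℓ¹`-norm at most `(k - 1)!`; since
`0 ≤ u, v ≤ 1`, that norm bounds `|f⁽ᵏ⁾|`.
-/

open Finset Finset.Nat Real

/-- The binary form `∑_{p+q=m} c (p, q) u^p v^q` evaluated at `u = s`, `v = 1 - s`. -/
noncomputable def formEval (m : ℕ) (c : ℕ × ℕ → ℝ) (s : ℝ) : ℝ :=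
  ∑ x ∈ antidiagonal m, c x * s ^ x.1 * (1 - s) ^ x.2

noncomputable def formNorm (m : ℕ) (c : ℕ × ℕ → ℝ) : ℝ :=
  ∑ x ∈ antidiagonal m, |c x|

def shiftFst (c : ℕ × ℕ → ℝ) : ℕ × ℕ → ℝ
  | (0, _) => 0
  | (p + 1, q) => c (p, q)

def shiftSnd (c : ℕ × ℕ → ℝ) : ℕ × ℕ → ℝ
  | (_, 0) => 0
  | (p, q + 1) => c (p, q)

/-- The coefficients of `uv (∂ᵤ - ∂ᵥ)` applied to the form with coefficients `c`. -/
def logisticDeriv (c : ℕ × ℕ → ℝ) (x : ℕ × ℕ) : ℝ :=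
  x.1 * shiftSnd c x - x.2 * shiftFst c x

section Shift

variable {M : Type*} [AddCommMonoid M] (φ : ℕ × ℕ → ℝ → M) (c : ℕ × ℕ → ℝ) (m : ℕ)

theorem sum_antidiagonal_succ_shiftFst (hφ : ∀ x, φ x 0 = 0) :
    ∑ x ∈ antidiagonal (m + 1), φ x (shiftFst c x) =
      ∑ x ∈ antidiagonal m, φ (x.1 + 1, x.2) (c x) := by
  rw [sum_antidiagonal_succ]
  simp only [shiftFst, hφ, zero_add]

theorem sum_antidiagonal_succ_shiftSnd (hφ : ∀ x, φ x 0 = 0) :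
    ∑ x ∈ antidiagonal (m + 1), φ x (shiftSnd c x) =
      ∑ x ∈ antidiagonal m, φ (x.1, x.2 + 1) (c x) := by
  rw [sum_antidiagonal_succ']
  simp only [shiftSnd, hφ, zero_add]

end Shift

theorem formEval_succ_logisticDeriv (m : ℕ) (c : ℕ × ℕ → ℝ) (s : ℝ) :
    formEval (m + 1) (logisticDeriv c) s = ∑ x ∈ antidiagonal m,
      c x * (x.1 * s ^ x.1 * (1 - s) ^ (x.2 + 1) - x.2 * s ^ (x.1 + 1) * (1 - s) ^ x.2) := by
  have hSnd := sum_antidiagonal_succ_shiftSnd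
    (fun x t => x.1 * t * s ^ x.1 * (1 - s) ^ x.2) c m (fun _ => by ring)
  have hFst := sum_antidiagonal_succ_shiftFst
    (fun x t => x.2 * t * s ^ x.1 * (1 - s) ^ x.2) c m (fun _ => by ring)
  simp only [formEval, logisticDeriv, sub_mul, sum_sub_distrib, hSnd, hFst, mul_sub]
  congr 1 <;> refine sum_congr rfl fun x _ => ?_ <;> ring

theorem formNorm_logisticDeriv_le (m : ℕ) (c : ℕ × ℕ → ℝ) :
    formNorm (m + 1) (logisticDeriv c) ≤ m * formNorm m c := by
  have hSnd := sum_antidiagonal_succ_shiftSnd (fun x t => (x.1 : ℝ) * |t|) c m (fun _ => by simp)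
  have hFst := sum_antidiagonal_succ_shiftFst (fun x t => (x.2 : ℝ) * |t|) c m (fun _ => by simp)
  calc formNorm (m + 1) (logisticDeriv c)
      ≤ ∑ x ∈ antidiagonal (m + 1), ((x.1 : ℝ) * |shiftSnd c x| + x.2 * |shiftFst c x|) := by
        refine sum_le_sum fun x _ => (abs_sub _ _).trans_eq ?_
        simp only [abs_mul, Nat.abs_cast]
    _ = ∑ x ∈ antidiagonal m, ((x.1 + x.2 : ℕ) : ℝ) * |c x| := by
        rw [sum_add_distrib, hSnd, hFst, ← sum_add_distrib]
        refine sum_congr rfl fun x _ => ?_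
        push_cast
        ring
    _ = m * formNorm m c := by
        rw [formNorm, mul_sum]
        exact sum_congr rfl fun x hx => by rw [mem_antidiagonal.mp hx]

theorem abs_formEval_le {s : ℝ} (hs₀ : 0 ≤ s) (hs₁ : s ≤ 1) (m : ℕ) (c : ℕ × ℕ → ℝ) :
    |formEval m c s| ≤ formNorm m c := by
  refine (abs_sum_le_sum_abs _ _).trans (sum_le_sum fun x _ => ?_)
  rw [abs_mul, abs_mul, abs_of_nonneg (pow_nonneg hs₀ _),
    abs_of_nonneg (pow_nonneg (sub_nonneg.2 hs₁) _)]
  have hu : s ^ x.1 ≤ 1 := pow_le_one₀ hs₀ hs₁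
  have hv : (1 - s) ^ x.2 ≤ 1 := pow_le_one₀ (sub_nonneg.2 hs₁) (by linarith)
  calc |c x| * s ^ x.1 * (1 - s) ^ x.2 ≤ |c x| * 1 * 1 := by gcongr
    _ = |c x| := by ring

theorem formNorm_iterate_logisticDeriv_le (m n : ℕ) (c : ℕ × ℕ → ℝ) :
    formNorm (m + n) (logisticDeriv^[n] c) ≤ m.ascFactorial n * formNorm m c := by
  induction n with
  | zero => simp
  | succ n ih =>
    rw [Function.iterate_succ_apply', ← add_assoc, Nat.ascFactorial_succ, Nat.cast_mul, mul_assoc]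
    calc formNorm (m + n + 1) (logisticDeriv (logisticDeriv^[n] c))
        ≤ (m + n : ℕ) * formNorm (m + n) (logisticDeriv^[n] c) := formNorm_logisticDeriv_le _ _
      _ ≤ (m + n : ℕ) * (m.ascFactorial n * formNorm m c) := by gcongr

section Logistic

variable {σ : ℝ → ℝ}

theorem hasDerivAt_pow_mul_one_sub_pow {x : ℝ} (hσ : HasDerivAt σ (σ x * (1 - σ x)) x)
    (p q : ℕ) : HasDerivAt (fun y => σ y ^ p * (1 - σ y) ^ q)
      (p * σ x ^ p * (1 - σ x) ^ (q + 1) - q * σ x ^ (p + 1) * (1 - σ x) ^ q) x := by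
  refine ((hσ.fun_pow p).fun_mul ((hσ.const_sub 1).fun_pow q)).congr_deriv ?_
  rcases p with _ | p <;> rcases q with _ | q <;> simp only [Nat.add_sub_cancel, pow_succ] <;>
    push_cast <;> ring

theorem hasDerivAt_formEval_comp {x : ℝ} (hσ : HasDerivAt σ (σ x * (1 - σ x)) x)
    (m : ℕ) (c : ℕ × ℕ → ℝ) :
    HasDerivAt (fun y => formEval m c (σ y)) (formEval (m + 1) (logisticDeriv c) (σ x)) x := by
  rw [formEval_succ_logisticDeriv]
  unfold formEval
  exact HasDerivAt.fun_sum fun i _ => by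
    simpa only [mul_assoc] using (hasDerivAt_pow_mul_one_sub_pow hσ i.1 i.2).const_mul (c i)

theorem iteratedDeriv_formEval_comp (hσ : ∀ x, HasDerivAt σ (σ x * (1 - σ x)) x)
    (m n : ℕ) (c : ℕ × ℕ → ℝ) :
    iteratedDeriv n (fun y => formEval m c (σ y)) =
      fun y => formEval (m + n) (logisticDeriv^[n] c) (σ y) := by
  induction n with
  | zero => simp
  | succ n ih =>
    rw [iteratedDeriv_succ, ih, Function.iterate_succ_apply']
    exact funext fun x => (hasDerivAt_formEval_comp (hσ x) _ _).deriv

end Logistic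

theorem hasDerivAt_log_one_add_exp_neg (x : ℝ) :
    HasDerivAt (fun x => log (1 + exp (-x))) (sigmoid x - 1) x := by
  have hpos : 0 < 1 + exp (-x) := by positivity
  convert (hasDerivAt_neg' x).exp.const_add 1 |>.log hpos.ne' using 1
  rw [sigmoid_def]
  field_simp
  ring

/-- On `antidiagonal 1` these are the coefficients of `-v`, i.e. of `σ - 1`. -/
def softplusDerivCoeff (x : ℕ × ℕ) : ℝ := -x.2

theorem deriv_log_one_add_exp_neg :
    deriv (fun x => log (1 + exp (-x))) = fun x => formEval 1 softplusDerivCoeff (sigmoid x) := by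
  funext x
  rw [(hasDerivAt_log_one_add_exp_neg x).deriv]
  simp [formEval, softplusDerivCoeff, sum_antidiagonal_succ]

theorem formNorm_softplusDerivCoeff : formNorm 1 softplusDerivCoeff = 1 := by
  simp [formNorm, softplusDerivCoeff, sum_antidiagonal_succ]

/-- All derivatives of the softplus function `f(x) = ln(1 + e^{−x})` are uniformly bounded
by factorials: for every integer `k ≥ 2` and every `x ∈ ℝ`, `|f^{(k)}(x)| ≤ (k−1)!`. -/
theorem softplus_deriv_factorial_bound (k : ℕ) (hk : 2 ≤ k) (x : ℝ) :
    |iteratedDeriv k (fun x : ℝ => Real.log (1 + Real.exp (-x))) x| ≤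
      (Nat.factorial (k - 1) : ℝ) := by
  obtain ⟨n, rfl⟩ : ∃ n, k = n + 1 := ⟨k - 1, by omega⟩
  rw [iteratedDeriv_succ', deriv_log_one_add_exp_neg,
    iteratedDeriv_formEval_comp hasDerivAt_sigmoid]
  calc _ ≤ formNorm (1 + n) (logisticDeriv^[n] softplusDerivCoeff) :=
        abs_formEval_le (sigmoid_nonneg x) (sigmoid_le_one x) _ _
    _ ≤ (1 : ℕ).ascFactorial n * formNorm 1 softplusDerivCoeff :=
        formNorm_iterate_logisticDeriv_le 1 n _
    _ = (n + 1 - 1).factorial := by simp [formNorm_softplusDerivCoeff]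
end
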